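/- Let n ≥ 4 be an integer and let a < b be real numbers. If the real parameters θ = (c, δ_0, …, δ_{n-2}) satisfy α_j^a = w_j^a for j = 0, 1, 2, 3, then δ_{n-4} = (b-a)^2 [ (b-a)^2 + (6-4n)(a+b)^2 ] / (128(2n-3)(2n-1)). -/

import Mathlib

open Finset intervalIntegral

/-- Hermite quadrature weight at `a`:
`w_j^a = (b-a)^(j+1) * n * Σ_{k=j}^{n-1} C(k,j) (n+k-j-1)!/(n+k+1)!`. -/
noncomputable def wA (n : ℕ) (a b : ℝ) (j : ℕ) : ℝ :=
  (b - a) ^ (j + 1) * n * ∑ k ∈ Finset.Icc j (n - 1),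
    (k.choose j : ℝ) * (Nat.factorial (n + k - j - 1)) / (Nat.factorial (n + k + 1))

/-- Hermite quadrature weight at `b`: `w_j^b = (-1)^j w_j^a`. -/
noncomputable def wB (n : ℕ) (a b : ℝ) (j : ℕ) : ℝ := (-1 : ℝ) ^ j * wA n a b j

/-- RIBP weight at `a`:
`α_j^a = (-1)^(j+1) [ (a+c)^(j+1)/(j+1)! + Σ_{i=0}^{j-1} δ_{i+n-1-j} a^i/i! ]`. -/
noncomputable def alphaA (n : ℕ) (a c : ℝ) (δ : ℕ → ℝ) (j : ℕ) : ℝ :=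
  (-1 : ℝ) ^ (j + 1) * ((a + c) ^ (j + 1) / (Nat.factorial (j + 1)) +
    ∑ i ∈ Finset.range j, δ (i + n - 1 - j) * a ^ i / (Nat.factorial i))

/-- RIBP weight at `b`:
`α_j^b = (-1)^j [ (b+c)^(j+1)/(j+1)! + Σ_{i=0}^{j-1} δ_{i+n-1-j} b^i/i! ]`. -/
noncomputable def alphaB (n : ℕ) (b c : ℝ) (δ : ℕ → ℝ) (j : ℕ) : ℝ :=
  (-1 : ℝ) ^ j * ((b + c) ^ (j + 1) / (Nat.factorial (j + 1)) +
    ∑ i ∈ Finset.range j, δ (i + n - 1 - j) * b ^ i / (Nat.factorial i))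

/-- Polynomial kernel `P(x,θ) = (x+c)^n/n! + Σ_{i=0}^{n-2} δ_i x^i/i!`. -/
noncomputable def Pker (n : ℕ) (c : ℝ) (δ : ℕ → ℝ) (x : ℝ) : ℝ :=
  (x + c) ^ n / (Nat.factorial n) + ∑ i ∈ Finset.range (n - 1), δ i * x ^ i / (Nat.factorial i)

/-!
The sum defining `w_j^a` telescopes: `C(j+i, j+1) (N+i)! / ((N+1) (N+j+i+1)!)` is an
antidifference of its summand (with `n = N + 1`, `k = j + i`), which gives the closed form
`w_j^a = (b-a)^(j+1) C(n, j+1) / (2n)(2n-1)⋯(2n-j)`. The equations `α_j^a = w_j^a` for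
`j = 0, 1, 2, 3` form a triangular system: the first gives `c = -(a+b)/2`, and the others
successively determine `δ_{n-2}`, `δ_{n-3}` and `δ_{n-4}`.
-/

open Nat

noncomputable def hermiteAntidiff (N j i : ℕ) : ℝ :=
  (j + i).choose (j + 1) * (N + i)! / ((N + 1) * (N + j + i + 1)!)

theorem hermiteAntidiff_succ_sub (N j i : ℕ) :
    hermiteAntidiff N j (i + 1) - hermiteAntidiff N j i =
      (j + i).choose j * (N + i)! / (N + j + i + 2)! := by
  have hpascal : (j + (i + 1)).choose (j + 1) = (j + i).choose j + (j + i).choose (j + 1) :=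
    Nat.choose_succ_succ (j + i) j
  have habsorb : ((j + i).choose (j + 1) : ℝ) * (j + 1) = (j + i).choose j * i := by
    have := Nat.choose_succ_right_eq (j + i) j
    rw [Nat.add_sub_cancel_left] at this
    exact_mod_cast this
  unfold hermiteAntidiff
  rw [hpascal, show N + (i + 1) = N + i + 1 by ring, Nat.factorial_succ (N + i),
    show N + j + (i + 1) + 1 = N + j + i + 2 by ring, Nat.factorial_succ (N + j + i + 1)]
  push_cast
  field_simp
  linear_combination -habsorb

theorem sum_Icc_choose_mul_factorial_div {N j : ℕ} (hj : j ≤ N) :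
    ∑ k ∈ Icc j N, (k.choose j : ℝ) * (N + 1 + k - j - 1)! / (N + 1 + k + 1)! =
      hermiteAntidiff N j (N + 1 - j) := by
  rw [← Finset.Ico_add_one_right_eq_Icc, Finset.sum_Ico_eq_sum_range]
  calc _ = ∑ i ∈ range (N + 1 - j), (hermiteAntidiff N j (i + 1) - hermiteAntidiff N j i) := by
        refine Finset.sum_congr rfl fun i _ => ?_
        rw [hermiteAntidiff_succ_sub, show N + 1 + (j + i) - j - 1 = N + i by omega,
          show N + 1 + (j + i) + 1 = N + j + i + 2 by omega]
    _ = _ := by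
        rw [Finset.sum_range_sub]
        simp [hermiteAntidiff]

theorem wA_eq {n j : ℕ} (hj : j < n) (a b : ℝ) :
    wA n a b j = (b - a) ^ (j + 1) * n.choose (j + 1) / (2 * n).descFactorial (j + 1) := by
  obtain ⟨N, rfl⟩ : ∃ N, n = N + 1 := ⟨n - 1, by omega⟩
  have hdesc := Nat.factorial_mul_descFactorial (show j + 1 ≤ 2 * (N + 1) by omega)
  rw [wA, Nat.add_sub_cancel, sum_Icc_choose_mul_factorial_div (by omega), hermiteAntidiff,
    show j + (N + 1 - j) = N + 1 by omega, show N + j + (N + 1 - j) + 1 = 2 * (N + 1) by omega,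
    ← hdesc, show N + (N + 1 - j) = 2 * (N + 1) - (j + 1) by omega]
  have := (2 * (N + 1) - (j + 1)).factorial_pos
  have : 0 < (2 * (N + 1)).descFactorial (j + 1) := Nat.descFactorial_pos.2 (by omega)
  push_cast
  field_simp

theorem wA_eq_descPochhammer {n j : ℕ} (hj : j < n) (a b : ℝ) :
    wA n a b j = (b - a) ^ (j + 1) * (descPochhammer ℝ (j + 1)).eval (n : ℝ) /
      ((j + 1)! * (descPochhammer ℝ (j + 1)).eval (2 * n : ℝ)) := by
  rw [wA_eq hj, Nat.cast_choose_eq_descPochhammer_div, ← descPochhammer_eval_eq_descFactorial ℝ,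
    Nat.cast_mul, Nat.cast_ofNat]
  ring

theorem wA_zero {n : ℕ} (hn : 0 < n) (a b : ℝ) : wA n a b 0 = (b - a) / 2 := by
  rw [wA_eq_descPochhammer hn]
  norm_num [descPochhammer_succ_eval]
  field_simp

theorem wA_one {n : ℕ} (hn : 1 < n) (a b : ℝ) :
    wA n a b 1 = (b - a) ^ 2 * (n - 1) / (4 * (2 * n - 1)) := by
  have : (1 : ℝ) < n := by exact_mod_cast hn
  have : 2 * (n : ℝ) - 1 ≠ 0 := by linarith
  rw [wA_eq_descPochhammer hn]
  norm_num [descPochhammer_succ_eval]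
  field_simp
  ring

theorem wA_two {n : ℕ} (hn : 2 < n) (a b : ℝ) :
    wA n a b 2 = (b - a) ^ 3 * (n - 2) / (24 * (2 * n - 1)) := by
  have : (2 : ℝ) < n := by exact_mod_cast hn
  have : (n : ℝ) - 1 ≠ 0 := by linarith
  have : 2 * (n : ℝ) - 1 ≠ 0 := by linarith
  rw [wA_eq_descPochhammer hn]
  norm_num [descPochhammer_succ_eval, Nat.factorial]
  field_simp
  ring

theorem wA_three {n : ℕ} (hn : 3 < n) (a b : ℝ) :
    wA n a b 3 = (b - a) ^ 4 * ((n - 2) * (n - 3)) / (96 * (2 * n - 1) * (2 * n - 3)) := by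
  have : (3 : ℝ) < n := by exact_mod_cast hn
  have : (n : ℝ) - 1 ≠ 0 := by linarith
  have : 2 * (n : ℝ) - 1 ≠ 0 := by linarith
  have : 2 * (n : ℝ) - 3 ≠ 0 := by linarith
  rw [wA_eq_descPochhammer hn]
  norm_num [descPochhammer_succ_eval, Nat.factorial]
  field_simp
  ring

theorem stmt12_general (n : ℕ) (hn : 4 ≤ n) (a b : ℝ) (c : ℝ) (δ : ℕ → ℝ)
    (h0 : alphaA n a c δ 0 = wA n a b 0) (h1 : alphaA n a c δ 1 = wA n a b 1)
    (h2 : alphaA n a c δ 2 = wA n a b 2) (h3 : alphaA n a c δ 3 = wA n a b 3) :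
    δ (n - 4) = (b - a) ^ 2 * ((b - a) ^ 2 + (6 - 4 * (n : ℝ)) * (a + b) ^ 2)
      / (128 * (2 * (n : ℝ) - 3) * (2 * (n : ℝ) - 1)) := by
  rw [wA_zero (by omega)] at h0
  rw [wA_one (by omega)] at h1
  rw [wA_two (by omega)] at h2
  rw [wA_three (by omega)] at h3
  simp only [alphaA, sum_range_succ, sum_range_zero] at h0 h1 h2 h3
  rw [show 0 + n - 1 - 1 = n - 2 by omega] at h1
  rw [show 0 + n - 1 - 2 = n - 3 by omega, show 1 + n - 1 - 2 = n - 2 by omega] at h2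
  rw [show 0 + n - 1 - 3 = n - 4 by omega, show 1 + n - 1 - 3 = n - 3 by omega,
    show 2 + n - 1 - 3 = n - 2 by omega] at h3
  norm_num [Nat.factorial] at h0 h1 h2 h3
  obtain rfl : c = -(a + b) / 2 := by linarith
  have hn' : (4 : ℝ) ≤ n := by exact_mod_cast hn
  have : (n : ℝ) * 2 - 1 ≠ 0 := by linarith
  have : (n : ℝ) * 2 - 3 ≠ 0 := by linarith
  linear_combination (norm := skip) h3 + a * h2 + a ^ 2 / 2 * h1
  field_simp
  ring

/-- if `α_j^a = w_j^a` for `j = 0, 1, 2, 3`, then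
`δ_{n-4} = (b-a)²[(b-a)² + (6-4n)(a+b)²] / (128(2n-3)(2n-1))`. -/
theorem stmt12 (n : ℕ) (hn : 4 ≤ n) (a b : ℝ) (hab : a < b) (c : ℝ) (δ : ℕ → ℝ)
    (h0 : alphaA n a c δ 0 = wA n a b 0) (h1 : alphaA n a c δ 1 = wA n a b 1)
    (h2 : alphaA n a c δ 2 = wA n a b 2) (h3 : alphaA n a c δ 3 = wA n a b 3) :
    δ (n - 4) = (b - a) ^ 2 * ((b - a) ^ 2 + (6 - 4 * (n : ℝ)) * (a + b) ^ 2)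
      / (128 * (2 * (n : ℝ) - 3) * (2 * (n : ℝ) - 1)) :=
  stmt12_general n hn a b c δ h0 h1 h2 h3
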